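/- With symmetric cross-diffusion d_{ij} = d_{ji}, powers β_{ij} = 2, and potentials μ_i(φ) = (d_i + d_{ii} φ_i^{α_i} + Σ_{j≠i} d_{ij} φ_j^2) φ_i, the function F(φ) = Σ_i (d_{ii} φ_i^{α_i+2}/(α_i+2) + d_i φ_i^2/2) + Σ_{i<j} d_{ij} φ_i^2 φ_j^2 / 2 satisfies ∂F/∂φ_i = μ_i for every i on (0,∞)^M. -/

import Mathlib

/-!
F is a sum of one-variable terms `selfEnergy` in each coordinate plus the pair energy. The
derivative of a pair term `c k l * φ k ^ 2 * φ l ^ 2 / 2` in the direction `e i` is nonzero only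
for `i ∈ {k, l}`; by the symmetry of `c`, the pairs with `i` as smaller index and those with `i`
as larger index together give the sum over all `j ≠ i` appearing in `μ i`.
-/

open Finset

noncomputable section

def selfEnergy (a b p x : ℝ) : ℝ := a * x ^ (p + 2) / (p + 2) + b * x ^ 2 / 2

theorem hasDerivAt_selfEnergy (a b : ℝ) {p x : ℝ} (hx : x ≠ 0) (hp : p + 2 ≠ 0) :
    HasDerivAt (selfEnergy a b p) ((b + a * x ^ p) * x) x := by
  have hrpow := Real.hasDerivAt_rpow_const (p := p + 2) (Or.inl hx)
  refine (((hrpow.const_mul a).div_const (p + 2)).add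
    (((hasDerivAt_pow 2 x).const_mul b).div_const 2)).congr_deriv ?_
  rw [show p + 2 - 1 = p + 1 by ring, Real.rpow_add_one hx]
  field_simp
  ring

variable {ι : Type*} [Fintype ι]

theorem hasFDerivAt_comp_apply {f : ℝ → ℝ} {f' : ℝ} {φ : ι → ℝ} {k : ι}
    (hf : HasDerivAt f f' (φ k)) :
    HasFDerivAt (fun ψ : ι → ℝ => f (ψ k))
      (f' • (ContinuousLinearMap.proj k : (ι → ℝ) →L[ℝ] ℝ)) φ :=
  hf.comp_hasFDerivAt φ (hasFDerivAt_apply k φ)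

theorem hasFDerivAt_sum_comp_apply {f : ι → ℝ → ℝ} {f' : ι → ℝ} {φ : ι → ℝ}
    (hf : ∀ k, HasDerivAt (f k) (f' k) (φ k)) :
    HasFDerivAt (fun ψ : ι → ℝ => ∑ k, f k (ψ k))
      (∑ k, f' k • (ContinuousLinearMap.proj k : (ι → ℝ) →L[ℝ] ℝ)) φ :=
  HasFDerivAt.fun_sum fun k _ => hasFDerivAt_comp_apply (hf k)

theorem sum_smul_proj_apply_single [DecidableEq ι] (a : ι → ℝ) (i : ι) :
    (∑ k, a k • (ContinuousLinearMap.proj k : (ι → ℝ) →L[ℝ] ℝ)) (Pi.single i 1) = a i := by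
  simp [Pi.single_apply]

section Pairs

variable [LinearOrder ι]

def pairEnergy (c : ι → ι → ℝ) (ψ : ι → ℝ) : ℝ :=
  ∑ k, ∑ l ∈ univ.filter (k < ·), c k l * (ψ k ^ 2 * ψ l ^ 2) / 2

def pairEnergyFDeriv (c : ι → ι → ℝ) (φ : ι → ℝ) : (ι → ℝ) →L[ℝ] ℝ :=
  ∑ k, ∑ l ∈ univ.filter (k < ·), ((c k l * φ k * φ l ^ 2) • ContinuousLinearMap.proj k
    + (c k l * φ k ^ 2 * φ l) • ContinuousLinearMap.proj l)

theorem hasFDerivAt_pairEnergy (c : ι → ι → ℝ) (φ : ι → ℝ) :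
    HasFDerivAt (pairEnergy c) (pairEnergyFDeriv c φ) φ := by
  have hsq (m : ι) : HasFDerivAt (fun ψ : ι → ℝ => ψ m ^ 2)
      ((2 * φ m) • (ContinuousLinearMap.proj m : (ι → ℝ) →L[ℝ] ℝ)) φ :=
    (hasFDerivAt_comp_apply (hasDerivAt_pow 2 (φ m))).congr_fderiv (by simp)
  have hterm (k l : ι) : HasFDerivAt (fun ψ : ι → ℝ => c k l * (ψ k ^ 2 * ψ l ^ 2) / 2)
      ((c k l * φ k * φ l ^ 2) • (ContinuousLinearMap.proj k : (ι → ℝ) →L[ℝ] ℝ)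
        + (c k l * φ k ^ 2 * φ l) • ContinuousLinearMap.proj l) φ := by
    simp_rw [mul_div_right_comm (c k l)]
    refine (((hsq k).fun_mul (hsq l)).const_mul _).congr_fderiv ?_
    ext v
    simp
    ring
  exact HasFDerivAt.fun_sum fun k _ => HasFDerivAt.fun_sum fun l _ => hterm k l

theorem sum_filter_gt_add_sum_filter_lt {c : ι → ι → ℝ} (hc : ∀ j k, c j k = c k j)
    (w : ι → ℝ) (i : ι) :
    ∑ l ∈ univ.filter (i < ·), c i l * w l + ∑ k ∈ univ.filter (· < i), c k i * w k
      = ∑ j ∈ univ.erase i, c i j * w j := by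
  simp_rw [hc _ i]
  rw [add_comm, ← sum_union]
  · congr 1
    ext j
    simp [lt_or_lt_iff_ne]
  · exact disjoint_filter.2 fun _ _ h => h.asymm

theorem pairEnergyFDeriv_apply_single {c : ι → ι → ℝ} (hc : ∀ j k, c j k = c k j)
    (φ : ι → ℝ) (i : ι) :
    pairEnergyFDeriv c φ (Pi.single i 1) = (∑ j ∈ univ.erase i, c i j * φ j ^ 2) * φ i := by
  simp only [pairEnergyFDeriv, FunLike.coe_sum, Finset.sum_apply, add_apply, smul_apply,
    ContinuousLinearMap.proj_apply, smul_eq_mul, Pi.single_apply, mul_ite, mul_one, mul_zero,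
    sum_add_distrib, sum_ite_irrel, sum_const_zero, sum_ite_eq', mem_filter, mem_univ, true_and,
    if_true, ← sum_filter]
  rw [← sum_filter_gt_add_sum_filter_lt hc, add_mul, sum_mul, sum_mul]
  congr 1
  exact sum_congr rfl fun _ _ => by ring

end Pairs

end

theorem stmt1_general (M : ℕ)
    (d dd α : Fin M → ℝ) (c : Fin M → Fin M → ℝ)
    (hα : ∀ i, 0 ≤ α i)
    (hsym : ∀ i j, c i j = c j i)
    (μ : Fin M → (Fin M → ℝ) → ℝ)
    (hμ : ∀ i φ, μ i φ =
      (d i + dd i * φ i ^ α i + ∑ j ∈ univ.erase i, c i j * φ j ^ 2) * φ i)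
    (F : (Fin M → ℝ) → ℝ)
    (hF : ∀ φ, F φ =
      (∑ i, (dd i * φ i ^ (α i + 2) / (α i + 2) + d i * φ i ^ 2 / 2))
      + ∑ i, ∑ j ∈ univ.filter (fun j => i < j), c i j * (φ i ^ 2 * φ j ^ 2) / 2) :
    ∀ φ : Fin M → ℝ, (∀ k, 0 < φ k) → ∀ i,
      fderiv ℝ F φ (Pi.single i 1) = μ i φ := by
  intro φ hφ i
  have hF_split : F = fun ψ => ∑ k, selfEnergy (dd k) (d k) (α k) (ψ k) + pairEnergy c ψ := funext hF
  have hself := hasFDerivAt_sum_comp_apply fun k =>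
    hasDerivAt_selfEnergy (dd k) (d k) (hφ k).ne' (by linarith [hα k] : α k + 2 ≠ 0)
  rw [hF_split, (hself.fun_add (hasFDerivAt_pairEnergy c φ)).fderiv, add_apply,
    sum_smul_proj_apply_single, pairEnergyFDeriv_apply_single hsym, hμ]
  ring

/-- In the symmetric case, the free energy
F(φ) = Σ_i (d_{ii} φ_i^{α_i+2}/(α_i+2) + d_i φ_i²/2) + Σ_{i<j} d_{ij} φ_i² φ_j²/2
satisfies ∂F/∂φ_i = μ_i on (0,∞)^M. -/
theorem stmt1 (M : ℕ) (hM : 1 ≤ M)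
    (d dd α : Fin M → ℝ) (c : Fin M → Fin M → ℝ)
    (hd : ∀ i, 0 ≤ d i) (hdd : ∀ i, 0 ≤ dd i) (hα : ∀ i, 0 ≤ α i)
    (hc : ∀ i j, 0 ≤ c i j) (hsym : ∀ i j, c i j = c j i)
    (μ : Fin M → (Fin M → ℝ) → ℝ)
    (hμ : ∀ i φ, μ i φ =
      (d i + dd i * φ i ^ α i + ∑ j ∈ univ.erase i, c i j * φ j ^ 2) * φ i)
    (F : (Fin M → ℝ) → ℝ)
    (hF : ∀ φ, F φ =
      (∑ i, (dd i * φ i ^ (α i + 2) / (α i + 2) + d i * φ i ^ 2 / 2))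
      + ∑ i, ∑ j ∈ univ.filter (fun j => i < j), c i j * (φ i ^ 2 * φ j ^ 2) / 2) :
    ∀ φ : Fin M → ℝ, (∀ k, 0 < φ k) → ∀ i,
      fderiv ℝ F φ (Pi.single i 1) = μ i φ :=
  stmt1_general M d dd α c hα hsym μ hμ F hF
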